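/- Let 𝔤 = 𝔤₁ ⊕ 𝔤₂ be a regular 2-step nilpotent Lie algebra and let (η,θ) ∈ 𝔤₁* × 𝔤₂* with θ ≠ 0. Then the set {ad*_x(η,θ) : x ∈ 𝔤₁}, which equals {ω_θ(x,·) : x ∈ 𝔤₁} ⊆ 𝔤₁*, is all of 𝔤₁*. Hence the coadjoint orbit through (η,θ) is the affine subspace 𝔤₁* ⊕ {θ}. -/
import Mathlib

/-- Let `𝔤 = 𝔤₁ ⊕ 𝔤₂` be a regular 2-step nilpotent Lie algebra
(encoded by its alternating bracket `B`) and `θ ∈ 𝔤₂*` nonzero.  Then the set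
`{ad*_x(η,θ) : x ∈ 𝔤₁} = {ω_θ(x,·) : x ∈ 𝔤₁} ⊆ 𝔤₁*`, i.e. the range of the
musical map `x ↦ θ(B x ·)`, is all of `𝔤₁*`; hence the coadjoint orbit through
`(η,θ)` is the affine subspace `𝔤₁* ⊕ {θ}`. -/
theorem stmt3
    (V Z : Type*) [AddCommGroup V] [Module ℝ V] [FiniteDimensional ℝ V]
    [AddCommGroup Z] [Module ℝ Z] [FiniteDimensional ℝ Z]
    (B : V →ₗ[ℝ] V →ₗ[ℝ] Z)
    (halt : ∀ x : V, B x x = 0)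
    (hgen : Submodule.span ℝ {z : Z | ∃ u v : V, B u v = z} = ⊤)
    (hreg : ∀ x : V, x ≠ 0 → Function.Surjective (B x))
    (θ : Module.Dual ℝ Z) (hθ : θ ≠ 0) (η : Module.Dual ℝ V) :
    Function.Surjective (fun x : V => θ.comp (B x)) := by
  have key : Function.Surjective (B.compr₂ θ) := by
    apply (LinearMap.injective_iff_surjective_of_finrank_eq_finrank
        (Subspace.dual_finrank_eq (K := ℝ) (V := V)).symm).mp
    rw [← LinearMap.ker_eq_bot, Submodule.eq_bot_iff]
    intro x hx
    rw [LinearMap.mem_ker] at hx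
    by_contra hx0
    apply hθ
    ext z
    obtain ⟨y, rfl⟩ := hreg x hx0 z
    have := congrArg (fun f => f y) hx
    simpa using this
  intro φ
  obtain ⟨x, hx⟩ := key φ
  exact ⟨x, by ext y; exact congrArg (fun f => f y) hx⟩
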